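/- Let f : 𝖱^n → 𝖱 be continuous and let I ⊆ N = {1,…,n} be nonempty. If f is I-cofinal and I ⊆ J ⊆ N, then f is J-cofinal. -/

import Mathlib

noncomputable section
open Set

/-- The first uncountable ordinal `ω₁`. -/
def Omega1 : Ordinal := Ordinal.omega 1

/-- The closed long ray `𝖱`: `ω₁ × [0,1)` with the lexicographic order. -/
def LongRay : Type 1 := {o : Ordinal // o < Omega1} ×ₗ (Set.Ico (0:ℝ) 1)

instance : LinearOrder LongRay :=
  inferInstanceAs (LinearOrder ({o : Ordinal // o < Omega1} ×ₗ (Set.Ico (0:ℝ) 1)))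

/-- `𝖱` carries the order topology. -/
instance : TopologicalSpace LongRay := Preorder.topology LongRay
instance : OrderTopology LongRay := ⟨rfl⟩

lemma omega1_pos : (0 : Ordinal) < Omega1 := Ordinal.omega_pos 1

/-- The point `0 = (0,0)` of the long ray. -/
def rayZero : LongRay := toLex (⟨0, omega1_pos⟩, ⟨0, by simp⟩)

/-- Identification of the countable ordinal `o` with the point `(o,0)` of the long ray
(junk value for `o ≥ ω₁`). -/
def ordR (o : Ordinal) : LongRay :=
  if h : o < Omega1 then toLex (⟨o, h⟩, ⟨0, by simp⟩) else rayZero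

/-- The `I`-diagonal at height `c` (only the values of `c` off `I` are relevant). -/
def Delta (n : ℕ) (I : Finset (Fin n)) (c : Fin n → LongRay) : Set (Fin n → LongRay) :=
  {x | (∀ i ∈ I, ∀ i' ∈ I, x i = x i') ∧ ∀ j ∉ I, x j = c j}

/-- `f` is `I`-cofinal if `f` restricted to `Δ_I = Δ_I(0)` is unbounded. -/
def ICofinal (n : ℕ) (f : (Fin n → LongRay) → LongRay) (I : Finset (Fin n)) : Prop :=
  ¬ BddAbove (f '' Delta n I (fun _ => rayZero))

/-- The cofinality class `𝔠(f) = {I : f is I-cofinal}`. -/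
def cofClass (n : ℕ) (f : (Fin n → LongRay) → LongRay) : Set (Finset (Fin n)) :=
  {I | ICofinal n f I}

/-- `M_I(c) = {x : x_i ≥ c for all i ∈ I}`. -/
def MSet (n : ℕ) (I : Finset (Fin n)) (c : LongRay) : Set (Fin n → LongRay) :=
  {x | ∀ i ∈ I, c ≤ x i}

/-- `E_I(b,d) = {x ∈ M_I(d) : x_j = b_j for all j ∉ I}`. -/
def ESet (n : ℕ) (I : Finset (Fin n)) (b : Fin n → LongRay) (d : LongRay) :
    Set (Fin n → LongRay) :=
  {x | (∀ i ∈ I, d ≤ x i) ∧ ∀ j ∉ I, x j = b j}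

/-!
Put `s` on the coordinates in `I` and `t` on those in `J \ I`: this gives a continuous
`G : 𝖱 × 𝖱 → 𝖱` with `s ↦ G (s, 0)` unbounded, and `J`-cofinality asks for `s ↦ G (s, s)` to be
unbounded. The long ray is Dedekind complete, connected and first countable, and every sequence
in it is bounded. So the set of `t` for which every `{s | w ≤ G (s, t)}` is unbounded is
sequentially closed (countably many closed unbounded sets have an unbounded intersection), and
so is its complement (countably many bounds have a common bound); by connectedness it contains
every `t`. Finally an increasing sequence with `w ≤ G (s (k + 1), s k)` converges to some `l`,
and then `w ≤ G (l, l)`.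
-/

open Filter Topology

theorem Filter.isCountablyGenerated_biInf_principal_of_countable {ι α : Type*} {p : ι → Prop}
    {s : ι → Set α} {D : Set ι} (hD : D.Countable) (h : ∀ i, p i → ∃ j ∈ D, p j ∧ s j ⊆ s i) :
    (⨅ (i) (_ : p i), 𝓟 (s i)).IsCountablyGenerated := by
  have : ⨅ (i) (_ : p i), 𝓟 (s i) = ⨅ t ∈ s '' {j ∈ D | p j}, 𝓟 t := by
    rw [iInf_image]
    refine le_antisymm (le_iInf₂ fun j hj => iInf₂_le j hj.2) (le_iInf₂ fun i hi => ?_)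
    obtain ⟨j, hjD, hj, hji⟩ := h i hi
    exact (iInf₂_le j ⟨hjD, hj⟩).trans (principal_mono.2 hji)
  rw [this]
  exact isCountablyGenerated_biInf_principal ((hD.mono (sep_subset _ _)).image _)

theorem OrderTopology.firstCountableTopology_of_countable {α : Type*} [LinearOrder α]
    [TopologicalSpace α] [OrderTopology α]
    (h : ∀ a : α, ∃ D : Set α, D.Countable ∧ (∀ b < a, ∃ d ∈ D, b ≤ d ∧ d < a) ∧
      ∀ b, a < b → ∃ d ∈ D, a < d ∧ d ≤ b) :
    FirstCountableTopology α := by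
  refine ⟨fun a => ?_⟩
  obtain ⟨D, hD, hlt, hgt⟩ := h a
  rw [nhds_eq_order]
  have := isCountablyGenerated_biInf_principal_of_countable (p := (· ∈ Iio a)) (s := Ioi) hD
    fun b hb => let ⟨d, hdD, hbd, hda⟩ := hlt b hb; ⟨d, hdD, hda, Ioi_subset_Ioi hbd⟩
  have := isCountablyGenerated_biInf_principal_of_countable (p := (· ∈ Ioi a)) (s := Iio) hD
    fun b hb => let ⟨d, hdD, had, hdb⟩ := hgt b hb; ⟨d, hdD, had, Iio_subset_Iio hdb⟩
  infer_instance

section CountablyBounded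

variable {α β X : Type*} [TopologicalSpace α] [LinearOrder β] [TopologicalSpace β]
  [OrderClosedTopology β] [TopologicalSpace X]

theorem isSeqClosed_setOf_exists_bddAbove [LinearOrder α] [NoMaxOrder β]
    (hα : ∀ u : ℕ → α, BddAbove (range u)) (hβ : ∀ u : ℕ → β, BddAbove (range u))
    {G : α × X → β} (hG : Continuous G) :
    IsSeqClosed {x | ∃ w, BddAbove {s | w ≤ G (s, x)}} := by
  intro x p hx hxp
  choose w b hb using hx
  obtain ⟨W, hW⟩ := hβ w
  obtain ⟨B, hB⟩ := hα b
  obtain ⟨W', hWW'⟩ := exists_gt W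
  -- beyond every bound `b k`, the values at `x k` lie below `W`, and so do their limits
  refine ⟨W', B, fun s hs => le_of_not_gt fun hBs => (hWW'.trans_le hs).not_ge ?_⟩
  have : Tendsto (fun k => G (s, x k)) atTop (𝓝 (G (s, p))) :=
    (hG.tendsto _).comp (tendsto_const_nhds.prodMk_nhds hxp)
  refine le_of_tendsto' this fun k => (le_of_not_ge fun h => ?_).trans (hW ⟨k, rfl⟩)
  exact hBs.not_ge ((hb k h).trans (hB ⟨k, rfl⟩))

variable [ConditionallyCompleteLinearOrder α] [OrderTopology α]

theorem exists_strictMono_tendsto_of_not_bddAbove (hα : ∀ u : ℕ → α, BddAbove (range u))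
    (T : ℕ → α → Set α) (hT : ∀ k x, ¬BddAbove (T k x)) (b : α) :
    ∃ s : ℕ → α, s 0 = b ∧ StrictMono s ∧ (∀ k, s (k + 1) ∈ T k (s k)) ∧
      ∃ l, Tendsto s atTop (𝓝 l) := by
  choose next hnext hlt using fun k x => not_bddAbove_iff.1 (hT k x) x
  let s : ℕ → α := fun k => Nat.rec b next k
  have hs : StrictMono s := strictMono_nat_of_lt_succ fun k => hlt k (s k)
  exact ⟨s, rfl, hs, fun k => hnext k (s k), _, tendsto_atTop_ciSup hs.monotone (hα s)⟩

theorem not_bddAbove_iInter_of_isClosed (hα : ∀ u : ℕ → α, BddAbove (range u))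
    {A : ℕ → Set α} (hA : ∀ n, IsClosed (A n)) (hAu : ∀ n, ¬BddAbove (A n)) :
    ¬BddAbove (⋂ n, A n) := by
  refine not_bddAbove_iff.2 fun b => ?_
  -- visit every `A n` infinitely often along one increasing sequence
  obtain ⟨s, rfl, hs, hmem, l, hl⟩ := exists_strictMono_tendsto_of_not_bddAbove hα
    (fun k _ => A k.unpair.1) (fun k _ => hAu _) b
  refine ⟨l, mem_iInter.2 fun n => ?_, (hs zero_lt_one).trans_le (hs.monotone.ge_of_tendsto hl 1)⟩
  have hsub : Tendsto (fun j => Nat.pair n j + 1) atTop atTop :=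
    tendsto_atTop_mono (fun j => (Nat.right_le_pair n j).trans (Nat.le_succ _)) tendsto_id
  exact (hA n).mem_of_tendsto (hl.comp hsub) (Eventually.of_forall fun j => by
    simpa using hmem (Nat.pair n j))

theorem isSeqClosed_setOf_forall_not_bddAbove (hα : ∀ u : ℕ → α, BddAbove (range u))
    {G : α × X → β} (hG : Continuous G) :
    IsSeqClosed {x | ∀ w, ¬BddAbove {s | w ≤ G (s, x)}} := by
  intro x p hx hxp w
  refine fun hb => not_bddAbove_iInter_of_isClosed hα (A := fun k => {s | w ≤ G (s, x k)})
    (fun k => isClosed_le continuous_const (hG.comp (Continuous.prodMk_left _)))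
    (fun k => hx k w) (hb.mono fun s hs => ?_)
  have : Tendsto (fun k => G (s, x k)) atTop (𝓝 (G (s, p))) :=
    (hG.tendsto _).comp (tendsto_const_nhds.prodMk_nhds hxp)
  exact ge_of_tendsto' this (mem_iInter.1 hs)

theorem not_bddAbove_setOf_le_of_preconnected [NoMaxOrder β] [PreconnectedSpace X]
    [SequentialSpace X] (hα : ∀ u : ℕ → α, BddAbove (range u))
    (hβ : ∀ u : ℕ → β, BddAbove (range u)) {G : α × X → β} (hG : Continuous G) {x₀ : X}
    (h₀ : ∀ w, ¬BddAbove {s | w ≤ G (s, x₀)}) (x : X) (w : β) :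
    ¬BddAbove {s | w ≤ G (s, x)} := by
  have hclopen : IsClopen {x | ∀ w, ¬BddAbove {s | w ≤ G (s, x)}} := by
    refine ⟨(isSeqClosed_setOf_forall_not_bddAbove hα hG).isClosed, ?_⟩
    rw [← isClosed_compl_iff, compl_ofPred]
    simpa only [not_forall, not_not] using (isSeqClosed_setOf_exists_bddAbove hα hβ hG).isClosed
  exact eq_univ_iff_forall.1 (hclopen.eq_univ ⟨x₀, h₀⟩) x w

theorem not_bddAbove_range_diag [Nonempty α] [NoMaxOrder β]
    (hα : ∀ u : ℕ → α, BddAbove (range u)) {G : α × α → β} (hG : Continuous G)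
    (h : ∀ t w, ¬BddAbove {s | w ≤ G (s, t)}) : ¬BddAbove (range fun s => G (s, s)) := by
  rintro ⟨B, hB⟩
  obtain ⟨W, hW⟩ := exists_gt B
  obtain ⟨s, -, -, hmem, l, hl⟩ := exists_strictMono_tendsto_of_not_bddAbove hα
    (fun _ t => {s | W ≤ G (s, t)}) (fun _ t => h t W) (Classical.arbitrary α)
  have : Tendsto (fun k => G (s (k + 1), s k)) atTop (𝓝 (G (l, l))) :=
    (hG.tendsto _).comp ((hl.comp (tendsto_add_atTop_nat 1)).prodMk_nhds hl)
  exact (hW.trans_le (ge_of_tendsto' this hmem)).not_ge (hB ⟨l, rfl⟩)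

end CountablyBounded

theorem not_bddAbove_setOf_le_of_not_bddAbove_range {α β : Type*} [Preorder α] [OrderBot α]
    [TopologicalSpace α] [CompactIccSpace α] [LinearOrder β] [TopologicalSpace β]
    [ClosedIciTopology β] {g : α → β} (hg : Continuous g) (h : ¬BddAbove (range g)) (w : β) :
    ¬BddAbove {s | w ≤ g s} := by
  rintro ⟨b, hb⟩
  have : Nonempty β := ⟨w⟩
  refine h (((isCompact_Icc (a := ⊥) (b := b)).bddAbove_image hg.continuousOn).union
    (bddAbove_Iic (a := w)) |>.mono ?_)
  rintro _ ⟨s, rfl⟩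
  by_cases hs : w ≤ g s
  · exact Or.inl ⟨s, ⟨bot_le, hb hs⟩, rfl⟩
  · exact Or.inr (le_of_not_ge hs)

namespace LongRay

def ord (z : LongRay) : Ordinal := (ofLex z).1

def frac (z : LongRay) : ℝ := (ofLex z).2

lemma ord_lt (z : LongRay) : ord z < Omega1 := (ofLex z).1.2

lemma frac_nonneg (z : LongRay) : 0 ≤ frac z := (ofLex z).2.2.1

lemma frac_lt_one (z : LongRay) : frac z < 1 := (ofLex z).2.2.2

def mk (a : Ordinal) (ha : a < Omega1) (r : ℝ) (hr₀ : 0 ≤ r) (hr₁ : r < 1) : LongRay :=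
  toLex (⟨a, ha⟩, ⟨r, hr₀, hr₁⟩)

lemma le_iff {z w : LongRay} : z ≤ w ↔ ord z < ord w ∨ ord z = ord w ∧ frac z ≤ frac w := by
  simp only [show z ≤ w ↔ _ from Prod.Lex.le_iff, ord, frac, Subtype.coe_lt_coe, Subtype.coe_le_coe,
    Subtype.ext_iff]

lemma lt_iff {z w : LongRay} : z < w ↔ ord z < ord w ∨ ord z = ord w ∧ frac z < frac w := by
  simp only [show z < w ↔ _ from Prod.Lex.lt_iff, ord, frac, Subtype.coe_lt_coe, Subtype.ext_iff]

lemma ext {z w : LongRay} (h₁ : ord z = ord w) (h₂ : frac z = frac w) : z = w :=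
  le_antisymm (le_iff.2 (Or.inr ⟨h₁, h₂.le⟩)) (le_iff.2 (Or.inr ⟨h₁.symm, h₂.ge⟩))

lemma ord_mono : Monotone ord := fun _ _ h => (le_iff.1 h).elim le_of_lt (·.1.le)

lemma lt_of_ord_lt {z w : LongRay} (h : ord z < ord w) : z < w := lt_iff.2 (Or.inl h)

lemma ord_ordR {a : Ordinal} (ha : a < Omega1) : ord (ordR a) = a := by
  simp [ordR, ha, ord]

lemma frac_ordR (a : Ordinal) : frac (ordR a) = 0 := by
  by_cases h : a < Omega1 <;> simp [ordR, h] <;> rfl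

lemma le_of_ord_le {z w : LongRay} (h : ord z ≤ ord w) (hz : frac z = 0) : z ≤ w :=
  le_iff.2 (h.lt_or_eq.imp_right fun h => ⟨h, hz ▸ frac_nonneg w⟩)

lemma ordR_le_iff {a : Ordinal} (ha : a < Omega1) {z : LongRay} : ordR a ≤ z ↔ a ≤ ord z :=
  ⟨fun h => ord_ordR ha ▸ ord_mono h, fun h => le_of_ord_le (by rwa [ord_ordR ha]) (frac_ordR a)⟩

lemma succ_lt_omega1 {a : Ordinal} (ha : a < Omega1) : Order.succ a < Omega1 :=
  (Cardinal.isSuccLimit_omega 1).succ_lt ha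

instance : OrderBot LongRay where
  bot := rayZero
  bot_le _ := le_of_ord_le zero_le rfl

instance : NoMaxOrder LongRay :=
  ⟨fun z => ⟨ordR (Order.succ (ord z)), lt_of_ord_lt <| by
    rw [ord_ordR (succ_lt_omega1 (ord_lt z))]; exact Order.lt_succ _⟩⟩

lemma exists_rat_between {z w : LongRay} (h : z < w) :
    ∃ d, z < d ∧ d < w ∧ ord d = ord z ∧ frac d ∈ range ((↑) : ℚ → ℝ) := by
  obtain ⟨u, hzu, hu1, hu⟩ : ∃ u, frac z < u ∧ u ≤ 1 ∧ ∀ r < u, ord z = ord w → r < frac w := by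
    rcases lt_iff.1 h with h | ⟨-, h⟩
    · exact ⟨1, frac_lt_one z, le_rfl, fun _ _ he => absurd he h.ne⟩
    · exact ⟨frac w, h, (frac_lt_one w).le, fun _ hr _ => hr⟩
  obtain ⟨q, hzq, hqu⟩ := exists_rat_btwn hzu
  refine ⟨mk (ord z) (ord_lt z) q ((frac_nonneg z).trans hzq.le) (hqu.trans_le hu1),
    lt_iff.2 (Or.inr ⟨rfl, hzq⟩), ?_, rfl, q, rfl⟩
  rcases lt_iff.1 h with h | ⟨he, -⟩
  · exact lt_of_ord_lt h
  · exact lt_iff.2 (Or.inr ⟨he, hu q hqu he⟩)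

instance : DenselyOrdered LongRay :=
  ⟨fun _ _ h => let ⟨d, hzd, hdw, _⟩ := exists_rat_between h; ⟨d, hzd, hdw⟩⟩

lemma frac_le_of_le {z w : LongRay} (h : z ≤ w) (he : ord z = ord w) : frac z ≤ frac w :=
  (le_iff.1 h).resolve_left he.not_lt |>.2

lemma exists_isLUB {S : Set LongRay} (hne : S.Nonempty) (hbdd : BddAbove S) : ∃ l, IsLUB S l := by
  obtain ⟨c, hc⟩ := hbdd
  set B := sSup (ord '' S)
  have hle : ∀ z ∈ S, ord z ≤ B := fun z hz =>
    le_csSup ⟨ord c, forall_mem_image.2 fun _ hz => ord_mono (hc hz)⟩ (mem_image_of_mem _ hz)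
  have hge : ∀ u ∈ upperBounds S, B ≤ ord u := fun u hu =>
    csSup_le (hne.image _) (forall_mem_image.2 fun _ hz => ord_mono (hu hz))
  have hB : B < Omega1 := (hge c hc).trans_lt (ord_lt c)
  by_cases hatt : B ∈ ord '' S
  swap
  · refine ⟨ordR B, fun z hz => (lt_of_ord_lt ?_).le, fun u hu => (ordR_le_iff hB).2 (hge u hu)⟩
    rw [ord_ordR hB]
    exact (hle z hz).lt_of_ne fun h => hatt ⟨z, hz, h⟩
  obtain ⟨z₀, hz₀, hz₀B⟩ := hatt
  set x := sSup (frac '' {z ∈ S | ord z = B})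
  have hbdd : BddAbove (frac '' {z ∈ S | ord z = B}) :=
    ⟨1, forall_mem_image.2 fun z _ => (frac_lt_one z).le⟩
  have hx_le : ∀ z ∈ S, ord z = B → frac z ≤ x := fun z hz he =>
    le_csSup hbdd (mem_image_of_mem _ ⟨hz, he⟩)
  have hx_ge : ∀ u ∈ upperBounds S, ord u = B → x ≤ frac u := fun u hu he =>
    csSup_le ⟨_, mem_image_of_mem _ ⟨hz₀, hz₀B⟩⟩
      (forall_mem_image.2 fun z hz => frac_le_of_le (hu hz.1) (hz.2.trans he.symm))
  by_cases hx : x < 1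
  · refine ⟨mk B hB x ((frac_nonneg z₀).trans (hx_le z₀ hz₀ hz₀B)) hx, fun z hz => ?_,
      fun u hu => ?_⟩
    · exact le_iff.2 ((hle z hz).lt_or_eq.imp_right fun he => ⟨he, hx_le z hz he⟩)
    · exact le_iff.2 ((hge u hu).lt_or_eq.imp_right fun he => ⟨he, hx_ge u hu he.symm⟩)
  · refine ⟨ordR (Order.succ B), fun z hz => (lt_of_ord_lt ?_).le, fun u hu => ?_⟩
    · rw [ord_ordR (succ_lt_omega1 hB)]
      exact (hle z hz).trans_lt (Order.lt_succ_of_not_isMax (not_isMax B))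
    · refine (ordR_le_iff (succ_lt_omega1 hB)).2 (Order.succ_le_of_lt ((hge u hu).lt_of_ne ?_))
      exact fun he => hx ((hx_ge u hu he.symm).trans_lt (frac_lt_one u))

open Classical in
noncomputable instance : ConditionallyCompleteLinearOrder LongRay where
  __ := (inferInstance : LinearOrder LongRay)
  __ := LinearOrder.toLattice
  __ := letI : SupSet LongRay :=
      ⟨fun S => if h : S.Nonempty ∧ BddAbove S then (exists_isLUB h.1 h.2).choose else ⊥⟩
    conditionallyCompleteLatticeOfLatticeOfsSup LongRay fun S hb hne => by
      convert (exists_isLUB hne hb).choose_spec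
      exact dif_pos ⟨hne, hb⟩
  csSup_of_not_bddAbove S h := by simp [sSup, h]
  csInf_of_not_bddBelow S h := (h (OrderBot.bddBelow S)).elim

lemma bddAbove_range (u : ℕ → LongRay) : BddAbove (range u) := by
  have hB : ⨆ i, ord (u i) < Omega1 := Ordinal.iSup_lt_omega_one fun i => ord_lt (u i)
  refine ⟨ordR (Order.succ (⨆ i, ord (u i))), forall_mem_range.2 fun i => (lt_of_ord_lt ?_).le⟩
  rw [ord_ordR (succ_lt_omega1 hB), Order.lt_succ_iff]
  exact Ordinal.le_iSup _ i

lemma countable_Iic_ord (z : LongRay) : (Iic (ord z)).Countable := by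
  rw [← Order.Iio_succ, ← Cardinal.le_aleph0_iff_set_countable, Cardinal.mk_Iio_ordinal,
    Cardinal.lift_le_aleph0, ← Cardinal.lt_aleph_one_iff]
  exact Cardinal.lt_omega_iff_card_lt.1 (succ_lt_omega1 (ord_lt z))

instance : FirstCountableTopology LongRay := by
  refine OrderTopology.firstCountableTopology_of_countable fun a =>
    ⟨{z | ord z ≤ ord a ∧ frac z ∈ range ((↑) : ℚ → ℝ)}, ?_, fun b hb => ?_, fun b hb => ?_⟩
  · refine MapsTo.countable_of_injOn (f := fun z => (ord z, frac z))
      (t := Iic (ord a) ×ˢ range ((↑) : ℚ → ℝ)) (fun z hz => hz) (fun z _ w _ h => ?_)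
      ((countable_Iic_ord a).prod (countable_range _))
    exact ext (congrArg Prod.fst h) (congrArg Prod.snd h)
  · obtain ⟨d, hbd, hda, hd, hdq⟩ := exists_rat_between hb
    exact ⟨d, ⟨hd ▸ ord_mono hb.le, hdq⟩, hbd.le, hda⟩
  · obtain ⟨d, had, hdb, hd, hdq⟩ := exists_rat_between hb
    exact ⟨d, ⟨hd.le, hdq⟩, had, hdb.le⟩

end LongRay

/-- if `f` is `I`-cofinal and `I ⊆ J`, then `f` is `J`-cofinal. -/
theorem cofinal_mono (n : ℕ) (f : (Fin n → LongRay) → LongRay) (hf : Continuous f)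
    (I J : Finset (Fin n)) (hI : I.Nonempty) (hIcof : ICofinal n f I) (hIJ : I ⊆ J) :
    ICofinal n f J := by
  classical
  let p : LongRay × LongRay → Fin n → LongRay := fun st i =>
    if i ∈ I then st.1 else if i ∈ J then st.2 else rayZero
  have hG : Continuous (f ∘ p) :=
    hf.comp (continuous_pi fun i => by dsimp only [p]; split_ifs <;> fun_prop)
  have h₀ : ¬BddAbove (range fun s => f (p (s, rayZero))) := by
    obtain ⟨i₀, hi₀⟩ := hI
    refine fun hb => hIcof (hb.mono ?_)
    rintro _ ⟨x, hx, rfl⟩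
    refine ⟨x i₀, congrArg f (funext fun i => ?_)⟩
    by_cases hi : i ∈ I
    · simp [p, hi, hx.1 i hi i₀ hi₀]
    · simp [p, hi, hx.2 i hi]
  have hdiag := not_bddAbove_range_diag LongRay.bddAbove_range hG
    (not_bddAbove_setOf_le_of_preconnected LongRay.bddAbove_range LongRay.bddAbove_range hG
      (not_bddAbove_setOf_le_of_not_bddAbove_range (hG.comp (Continuous.prodMk_left _)) h₀))
  have hdiag_sub : range (fun s => (f ∘ p) (s, s)) ⊆ f '' Delta n J (fun _ => rayZero) := by
    refine range_subset_iff.2 fun s => ⟨p (s, s), ⟨fun i hi i' hi' => ?_, fun j hj => ?_⟩, rfl⟩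
    · simp [p, hi, hi']
    · simp [p, hj, mt (@hIJ j) hj]
  exact fun hb => hdiag (hb.mono hdiag_sub)
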